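/- Let x be a string of length n with minimal cover array C and maximal cover array C^M. Then for every position i with 1 ≤ i ≤ n: if C^M[i] = 0 then C[i] = 0; if C^M[i] ≠ 0 and C[C^M[i]] ≠ 0 then C[i] = C[C^M[i]]; and if C^M[i] ≠ 0 and C[C^M[i]] = 0 then C[i] = C^M[i]. -/

import Mathlib

/-!
Every cover of a cover of `x` is a cover of `x`, and every cover of `x` shorter than the longest
cover `w` of `x` is a cover of `w` (it covers the prefix `w` because it is also a suffix of `w`).
So the cover lengths of `x` are `|w|` together with the cover lengths of `w`, all of which are
smaller than `|w|`: the shortest cover of `x` is the shortest cover of `w` if `w` has one, and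
`w` itself otherwise.
-/

/-- `w` is a (proper, aligned-style) cover of `x`: `|w| < |x|` and there is a set `P`
of 1-based starting positions in `{1,…,n−m+1}` such that `w` occurs at every
position of `P` and the occurrences cover every position `1,…,n`. -/
def IsCover {α : Type*} (w x : List α) : Prop :=
  w.length < x.length ∧
  ∃ P : Finset ℕ,
    (∀ i ∈ P, 1 ≤ i ∧ i ≤ x.length - w.length + 1) ∧
    (∀ i ∈ P, (x.drop (i - 1)).take w.length = w) ∧
    (P.biUnion fun i => Finset.Icc i (i + w.length - 1)) = Finset.Icc 1 x.length

/-- `u` is a border of `x`: `u ≠ x` and `u` is both a prefix and a suffix of `x`. -/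
def IsBorder {α : Type*} (u x : List α) : Prop :=
  u ≠ x ∧ u <+: x ∧ u <:+ x

/-- `C` is the minimal cover array of `x` (1-based): for `1 ≤ i ≤ |x|`, `C i` is the
length of the shortest cover of `x[1..i]` if one exists, and `0` otherwise. -/
def IsMinCoverArray {α : Type*} (x : List α) (C : ℕ → ℕ) : Prop :=
  ∀ i, 1 ≤ i → i ≤ x.length →
    ((∀ w : List α, ¬ IsCover w (x.take i)) ∧ C i = 0) ∨
    (∃ w : List α, IsCover w (x.take i) ∧ C i = w.length ∧
      ∀ v : List α, IsCover v (x.take i) → w.length ≤ v.length)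

/-- `C` is the maximal cover array of `x` (1-based): for `1 ≤ i ≤ |x|`, `C i` is the
length of the longest cover of `x[1..i]` if one exists, and `0` otherwise. -/
def IsMaxCoverArray {α : Type*} (x : List α) (C : ℕ → ℕ) : Prop :=
  ∀ i, 1 ≤ i → i ≤ x.length →
    ((∀ w : List α, ¬ IsCover w (x.take i)) ∧ C i = 0) ∨
    (∃ w : List α, IsCover w (x.take i) ∧ C i = w.length ∧
      ∀ v : List α, IsCover v (x.take i) → v.length ≤ w.length)

/-- `B` is the border array of `x` (1-based): for `1 ≤ i ≤ |x|`, `B i` is the length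
of the longest border of `x[1..i]`. -/
def IsBorderArray {α : Type*} (x : List α) (B : ℕ → ℕ) : Prop :=
  ∀ i, 1 ≤ i → i ≤ x.length →
    ∃ u : List α, IsBorder u (x.take i) ∧ B i = u.length ∧
      ∀ v : List α, IsBorder v (x.take i) → v.length ≤ u.length

/-- Position `j` of the cover array `C` (of a string of length `n`) is totally covered. -/
def TotallyCovered (n : ℕ) (C : ℕ → ℕ) (j : ℕ) : Prop :=
  C j ≠ 0 ∧ ∃ i, j < i ∧ i ≤ n ∧ C i ≠ 0 ∧
    i - C i + 1 ≤ j - C j + 1 ∧ j - C j + 1 < j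

/-- `CP` is the pruned minimal cover array obtained from `C`: entries at totally
covered positions are set to `0`, all other entries are kept. -/
def IsPrunedCoverArray (n : ℕ) (C CP : ℕ → ℕ) : Prop :=
  ∀ j, 1 ≤ j → j ≤ n →
    (TotallyCovered n C j → CP j = 0) ∧ (¬ TotallyCovered n C j → CP j = C j)

/-- The cover-graph relation `R_γ` on positions `{1,…,n}` induced by the array `γ`:
`p R_γ q` iff there are `i` with `γ i ≠ 0` and `1 ≤ j ≤ γ i` with `{p,q} = {j, i−γ i + j}`. -/
def CoverRel (n : ℕ) (γ : ℕ → ℕ) (p q : ℕ) : Prop :=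
  ∃ i j, 1 ≤ i ∧ i ≤ n ∧ γ i ≠ 0 ∧ 1 ≤ j ∧ j ≤ γ i ∧
    ({p, q} : Set ℕ) = {j, i - γ i + j}

section

variable {α : Type*}

-- Positions are 0-based here, unlike in `IsCover`.
def OccursAt (w x : List α) (k : ℕ) : Prop :=
  (x.drop k).take w.length = w

namespace OccursAt

variable {u w x : List α} {k l m : ℕ}

lemma add_length_le (h : OccursAt w x k) (hw : 0 < w.length) : k + w.length ≤ x.length := by
  have := congrArg List.length h
  simp only [List.length_take, List.length_drop] at this
  omega

lemma of_take (h : OccursAt w (x.take m) k) : OccursAt w x k := by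
  rcases Nat.eq_zero_or_pos w.length with hw | hw
  · simp [OccursAt, List.length_eq_zero_iff.1 hw]
  have hb := h.add_length_le hw
  rw [List.length_take] at hb
  rwa [OccursAt, List.drop_take, List.take_take, min_eq_left (by omega)] at h

lemma take (h : OccursAt w x k) (hm : k + w.length ≤ m) : OccursAt w (x.take m) k := by
  rwa [OccursAt, List.drop_take, List.take_take, min_eq_left (by omega)]

lemma trans (hu : OccursAt u w l) (hw : OccursAt w x k) : OccursAt u x (k + l) := by
  rw [OccursAt, ← hw] at hu
  have := OccursAt.of_take (x := x.drop k) hu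
  rwa [OccursAt, List.drop_drop] at this

lemma within (hu : OccursAt u x k) (hw : OccursAt w x l) (hlk : l ≤ k)
    (hend : k + u.length ≤ l + w.length) : OccursAt u w (k - l) := by
  have hu' : OccursAt u (x.drop l) (k - l) := by
    rwa [OccursAt, List.drop_drop, Nat.add_sub_cancel' hlk]
  rw [← hw]
  exact hu'.take (by omega)

end OccursAt

lemma isCover_iff {w x : List α} :
    IsCover w x ↔ w.length < x.length ∧
      ∀ j < x.length, ∃ k ≤ j, j < k + w.length ∧ OccursAt w x k := by
  classical
  refine and_congr_right fun hlt => ⟨?_, fun hcov => ?_⟩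
  · rintro ⟨P, hP, hocc, hcov⟩ j hj
    have hj' : j + 1 ∈ P.biUnion fun i => Finset.Icc i (i + w.length - 1) := by
      rw [hcov, Finset.mem_Icc]
      omega
    obtain ⟨i, hi, hji⟩ := Finset.mem_biUnion.1 hj'
    rw [Finset.mem_Icc] at hji
    have := (hP i hi).1
    exact ⟨i - 1, by omega, by omega, hocc i hi⟩
  · obtain ⟨k, hk, hk', -⟩ := hcov 0 (by omega)
    have hw : 0 < w.length := by omega
    refine ⟨(Finset.Icc 1 x.length).filter fun i => OccursAt w x (i - 1), ?_, ?_, ?_⟩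
    · intro i hi
      rw [Finset.mem_filter, Finset.mem_Icc] at hi
      have := hi.2.add_length_le hw
      omega
    · exact fun i hi => (Finset.mem_filter.1 hi).2
    · ext j
      simp only [Finset.mem_biUnion, Finset.mem_filter, Finset.mem_Icc]
      constructor
      · rintro ⟨i, ⟨⟨hi1, -⟩, hi⟩, hj1, hj2⟩
        have := hi.add_length_le hw
        omega
      · rintro ⟨hj1, hj2⟩
        obtain ⟨k, hkj, hjk, hk⟩ := hcov (j - 1) (by omega)
        have := hk.add_length_le hw
        exact ⟨k + 1, ⟨⟨by omega, by omega⟩, hk⟩, by omega, by omega⟩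

namespace IsCover

variable {u w x : List α}

lemma length_pos (h : IsCover w x) : 0 < w.length := by
  obtain ⟨hlt, hcov⟩ := isCover_iff.1 h
  obtain ⟨k, hk0, hk, -⟩ := hcov 0 (by omega)
  omega

lemma occursAt_zero (h : IsCover w x) : OccursAt w x 0 := by
  obtain ⟨hlt, hcov⟩ := isCover_iff.1 h
  obtain ⟨k, hk, -, hocc⟩ := hcov 0 (by omega)
  rwa [Nat.le_zero.1 hk] at hocc

lemma take_length (h : IsCover w x) : x.take w.length = w := by
  simpa [OccursAt] using h.occursAt_zero

lemma occursAt_length_sub (h : IsCover w x) : OccursAt w x (x.length - w.length) := by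
  obtain ⟨hlt, hcov⟩ := isCover_iff.1 h
  obtain ⟨k, -, hk, hocc⟩ := hcov (x.length - 1) (by omega)
  have := hocc.add_length_le h.length_pos
  rwa [show k = x.length - w.length by omega] at hocc

lemma trans (hu : IsCover u w) (hw : IsCover w x) : IsCover u x := by
  obtain ⟨huw, hcovu⟩ := isCover_iff.1 hu
  obtain ⟨hwx, hcovw⟩ := isCover_iff.1 hw
  refine isCover_iff.2 ⟨huw.trans hwx, fun j hj => ?_⟩
  obtain ⟨k, hkj, hjk, hk⟩ := hcovw j hj
  obtain ⟨l, hlj, hjl, hl⟩ := hcovu (j - k) (by omega)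
  exact ⟨k + l, by omega, by omega, hl.trans hk⟩

lemma of_length_lt (hu : IsCover u x) (hw : IsCover w x) (hlen : u.length < w.length) :
    IsCover u w := by
  obtain ⟨-, hcov⟩ := isCover_iff.1 hu
  have hwx := hw.1
  refine isCover_iff.2 ⟨hlen, fun j hj => ?_⟩
  obtain ⟨k, hkj, hjk, hk⟩ := hcov j (by omega)
  by_cases hfit : k + u.length ≤ w.length
  · exact ⟨k, hkj, hjk, by simpa using hk.within hw.occursAt_zero (Nat.zero_le k) (by omega)⟩
  · refine ⟨w.length - u.length, by omega, by omega, ?_⟩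
    have := hu.occursAt_length_sub.within hw.occursAt_length_sub (by omega) (by omega)
    rwa [show x.length - u.length - (x.length - w.length) = w.length - u.length by omega] at this

end IsCover

def coverLengths (x : List α) : Set ℕ :=
  {n | ∃ w, IsCover w x ∧ w.length = n}

lemma pos_and_lt_of_mem_coverLengths_take {x : List α} {i n : ℕ}
    (hn : n ∈ coverLengths (x.take i)) : 0 < n ∧ n < i := by
  obtain ⟨w, hw, rfl⟩ := hn
  have := hw.1
  rw [List.length_take] at this
  exact ⟨hw.length_pos, by omega⟩

lemma coverLengths_eq_insert_of_isGreatest {x : List α} {m : ℕ}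
    (h : IsGreatest (coverLengths x) m) :
    coverLengths x = insert m (coverLengths (x.take m)) := by
  obtain ⟨⟨w, hw, rfl⟩, hmax⟩ := h
  rw [hw.take_length]
  ext n
  constructor
  · rintro ⟨v, hv, rfl⟩
    rcases (hmax ⟨v, hv, rfl⟩).lt_or_eq with hlt | heq
    · exact Or.inr ⟨v, hv.of_length_lt hw hlt, rfl⟩
    · exact Or.inl heq
  · rintro (rfl | ⟨v, hv, rfl⟩)
    · exact ⟨w, hw, rfl⟩
    · exact ⟨v, hv.trans hw, rfl⟩

section CoverArrays

variable {x : List α} {C : ℕ → ℕ} {i : ℕ}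

lemma IsMinCoverArray.eq_zero (hC : IsMinCoverArray x C) (hi1 : 1 ≤ i) (hi2 : i ≤ x.length)
    (he : coverLengths (x.take i) = ∅) : C i = 0 := by
  rcases hC i hi1 hi2 with ⟨-, h0⟩ | ⟨w, hw, -⟩
  · exact h0
  · exact (he.subset ⟨w, hw, rfl⟩).elim

lemma IsMinCoverArray.isLeast (hC : IsMinCoverArray x C) (hi1 : 1 ≤ i) (hi2 : i ≤ x.length)
    (hne : (coverLengths (x.take i)).Nonempty) : IsLeast (coverLengths (x.take i)) (C i) := by
  rcases hC i hi1 hi2 with ⟨hno, -⟩ | ⟨w, hw, hCw, hmin⟩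
  · obtain ⟨_, w, hw, -⟩ := hne
    exact (hno w hw).elim
  · exact ⟨⟨w, hw, hCw.symm⟩, hCw ▸ fun _ ⟨v, hv, hvn⟩ => hvn ▸ hmin v hv⟩

lemma IsMaxCoverArray.eq_zero (hC : IsMaxCoverArray x C) (hi1 : 1 ≤ i) (hi2 : i ≤ x.length)
    (he : coverLengths (x.take i) = ∅) : C i = 0 := by
  rcases hC i hi1 hi2 with ⟨-, h0⟩ | ⟨w, hw, -⟩
  · exact h0
  · exact (he.subset ⟨w, hw, rfl⟩).elim

lemma IsMaxCoverArray.isGreatest (hC : IsMaxCoverArray x C) (hi1 : 1 ≤ i) (hi2 : i ≤ x.length)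
    (hne : (coverLengths (x.take i)).Nonempty) : IsGreatest (coverLengths (x.take i)) (C i) := by
  rcases hC i hi1 hi2 with ⟨hno, -⟩ | ⟨w, hw, hCw, hmax⟩
  · obtain ⟨_, w, hw, -⟩ := hne
    exact (hno w hw).elim
  · exact ⟨⟨w, hw, hCw.symm⟩, hCw ▸ fun _ ⟨v, hv, hvn⟩ => hvn ▸ hmax v hv⟩

end CoverArrays

end

/-- Relation between the minimal and maximal cover arrays:
`C^M i = 0 → C i = 0`; if `C^M i ≠ 0` and `C (C^M i) ≠ 0` then `C i = C (C^M i)`;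
and if `C^M i ≠ 0` and `C (C^M i) = 0` then `C i = C^M i`. -/
theorem min_of_max_coverArray {α : Type*} (x : List α) (C CM : ℕ → ℕ)
    (hC : IsMinCoverArray x C) (hCM : IsMaxCoverArray x CM) :
    ∀ i, 1 ≤ i → i ≤ x.length →
      (CM i = 0 → C i = 0) ∧
      (CM i ≠ 0 → C (CM i) ≠ 0 → C i = C (CM i)) ∧
      (CM i ≠ 0 → C (CM i) = 0 → C i = CM i) := by
  intro i hi1 hi2
  rcases (coverLengths (x.take i)).eq_empty_or_nonempty with hS | hS
  · have hCMi := hCM.eq_zero hi1 hi2 hS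
    exact ⟨fun _ => hC.eq_zero hi1 hi2 hS, fun h => (h hCMi).elim, fun h => (h hCMi).elim⟩
  have hmax := hCM.isGreatest hi1 hi2 hS
  obtain ⟨hm_pos, hm_lt⟩ := pos_and_lt_of_mem_coverLengths_take hmax.1
  have hS_eq : coverLengths (x.take i) = {CM i} ∪ coverLengths (x.take (CM i)) := by
    rw [← Set.insert_eq, coverLengths_eq_insert_of_isGreatest hmax, List.take_take,
      min_eq_left hm_lt.le]
  have hCi := hC.isLeast hi1 hi2 hS
  rw [hS_eq] at hCi
  refine ⟨fun h => (hm_pos.ne' h).elim, ?_⟩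
  rcases (coverLengths (x.take (CM i))).eq_empty_or_nonempty with hT | hT
  · have hCm := hC.eq_zero hm_pos (by omega) hT
    rw [hT, Set.union_empty] at hCi
    exact ⟨fun _ h => (h hCm).elim, fun _ _ => hCi.unique isLeast_singleton⟩
  · have hCm := hC.isLeast hm_pos (by omega) hT
    obtain ⟨hCm_pos, hCm_lt⟩ := pos_and_lt_of_mem_coverLengths_take hCm.1
    have hmin := (isLeast_singleton (a := CM i)).union hCm
    rw [min_eq_right hCm_lt.le] at hmin
    exact ⟨fun _ _ => hCi.unique hmin, fun _ h => (hCm_pos.ne' h).elim⟩
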